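/- arXiv:2203.16830 — 3 statements merged into one kernel-verified Lean document; each statement's English description precedes it below -/
import Mathlib

section
/- Let v, p_1, …, p_g be nonzero vectors in R^{n+1} that are pairwise distinct, and suppose for each transposition (j g) ∈ S_g there is a linear map T_j : R^{n+1} → R^{n+1} with T_j(v) = v, T_j(p_i) = p_i for i ∉ {j,g}, T_j(p_j) = p_g, and T_j(p_g) = p_j. Then v, p_1, …, p_{g-1} are linearly independent. -/
/-- Let `v, p 0, …, p m` be nonzero pairwise distinct vectors in `ℝ^{n+1}` (so `g = m + 1`
vectors `p_1, …, p_g` in the notation of the paper).  Suppose for each `j` (corresponding to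
the transposition `(j g)`) there is a linear map `T j` fixing `v` and all `p i` with
`i ∉ {j, g}`, and swapping `p j` with `p (last)`.  Then `v, p_1, …, p_{g-1}` are linearly
independent. -/
theorem linear_independent_of_transposition_maps
    (n m : ℕ) (v : Fin (n + 1) → ℝ) (p : Fin (m + 1) → (Fin (n + 1) → ℝ))
    (hv : v ≠ 0) (hp : ∀ i, p i ≠ 0) (hpv : ∀ i, p i ≠ v)
    (hpinj : Function.Injective p)
    (T : Fin m → ((Fin (n + 1) → ℝ) →ₗ[ℝ] (Fin (n + 1) → ℝ)))
    (hTv : ∀ j, T j v = v)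
    (hTfix : ∀ j, ∀ i : Fin m, i ≠ j → T j (p i.castSucc) = p i.castSucc)
    (hTswap₁ : ∀ j, T j (p j.castSucc) = p (Fin.last m))
    (hTswap₂ : ∀ j, T j (p (Fin.last m)) = p j.castSucc) :
    LinearIndependent ℝ (Fin.cons v (fun i : Fin m => p i.castSucc) : Fin (m + 1) → (Fin (n + 1) → ℝ)) := by
  set f : Fin (m + 1) → (Fin (n + 1) → ℝ) := Fin.cons v (fun i : Fin m => p i.castSucc) with hf
  rw [Fintype.linearIndependent_iff]
  intro c hc
  have key : ∀ j : Fin m, c j.succ = 0 := by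
    intro j
    have h1 : ∑ i, (T j) (c i • f i) = 0 := by
      rw [← map_sum, hc, map_zero]
    have h2 : ∑ i, ((T j) (c i • f i) - c i • f i) = 0 := by
      rw [Finset.sum_sub_distrib, h1, hc, sub_zero]
    have h3 : ∑ i, ((T j) (c i • f i) - c i • f i)
        = c j.succ • (p (Fin.last m) - p j.castSucc) := by
      rw [Finset.sum_eq_single j.succ]
      · rw [hf]
        simp [Fin.cons_succ, map_smul, hTswap₁ j, smul_sub]
      · intro i _ hi
        rcases Fin.eq_zero_or_eq_succ i with rfl | ⟨k, rfl⟩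
        · simp [hf, hTv j]
        · have hk : k ≠ j := fun h => hi (by rw [h])
          simp [hf, Fin.cons_succ, map_smul, hTfix j k hk]
      · simp
    rw [h3] at h2
    have hne : p (Fin.last m) - p j.castSucc ≠ 0 := by
      intro h
      exact hpinj.ne (Fin.castSucc_lt_last j).ne' (sub_eq_zero.mp h)
    exact (smul_eq_zero.mp h2).resolve_right hne
  intro i
  rcases Fin.eq_zero_or_eq_succ i with rfl | ⟨k, rfl⟩
  · have h0 : c 0 • v = 0 := by
      rw [← hc, Fin.sum_univ_succ]
      simp [hf, key]
    rcases smul_eq_zero.mp h0 with h | h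
    · exact h
    · exact absurd h hv
  · exact key k
end

section
/- Under the hypotheses of the previous lemma, the linear span of {v, p_1, …, p_g} in R^{n+1} has dimension at least g. -/
/-- Under the hypotheses of the previous lemma (nonzero pairwise distinct vectors
`v, p 0, …, p m` in `ℝ^{n+1}` with `g = m + 1`, and linear maps realizing the
transpositions `(j g)`), the span of `{v, p_1, …, p_g}` has dimension at least `g = m + 1`. -/
theorem span_dim_ge_of_transposition_maps
    (n m : ℕ) (v : Fin (n + 1) → ℝ) (p : Fin (m + 1) → (Fin (n + 1) → ℝ))
    (hv : v ≠ 0) (hp : ∀ i, p i ≠ 0) (hpv : ∀ i, p i ≠ v)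
    (hpinj : Function.Injective p)
    (T : Fin m → ((Fin (n + 1) → ℝ) →ₗ[ℝ] (Fin (n + 1) → ℝ)))
    (hTv : ∀ j, T j v = v)
    (hTfix : ∀ j, ∀ i : Fin m, i ≠ j → T j (p i.castSucc) = p i.castSucc)
    (hTswap₁ : ∀ j, T j (p j.castSucc) = p (Fin.last m))
    (hTswap₂ : ∀ j, T j (p (Fin.last m)) = p j.castSucc) :
    m + 1 ≤ Module.finrank ℝ (Submodule.span ℝ (insert v (Set.range p))) := by
  classical
  -- Key: any relation ∑ cᵢ • pᵢ + a • v = 0 forces c (j.castSucc) = c (last) for all j.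
  have key : ∀ (c : Fin (m + 1) → ℝ) (a : ℝ),
      (∑ i, c i • p i) + a • v = 0 → ∀ j : Fin m, c j.castSucc = c (Fin.last m) := by
    intro c a h j
    have h2 := congrArg (T j) h
    simp only [map_add, map_sum, map_smul, hTv, map_zero] at h2
    rw [Fin.sum_univ_castSucc] at h h2
    rw [hTswap₂] at h2
    have hsum : (∑ i : Fin m, c i.castSucc • (T j) (p i.castSucc))
        = (∑ i : Fin m, c i.castSucc • p i.castSucc)
          + (c j.castSucc • p (Fin.last m) - c j.castSucc • p j.castSucc) := by
      have hterm : ∀ i ∈ Finset.univ, c i.castSucc • (T j) (p i.castSucc) =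
          c i.castSucc • p i.castSucc +
            (if i = j then c j.castSucc • p (Fin.last m) - c j.castSucc • p j.castSucc
             else 0) := by
        intro i _
        by_cases hij : i = j
        · subst hij
          rw [hTswap₁]
          simp
        · rw [hTfix j i hij]
          simp [hij]
      rw [Finset.sum_congr rfl hterm, Finset.sum_add_distrib,
        Finset.sum_ite_eq' Finset.univ j]
      simp
    rw [hsum] at h2
    have hzero : (c j.castSucc - c (Fin.last m)) • (p (Fin.last m) - p j.castSucc) = 0 := by
      linear_combination (norm := module) h2 - h
    rcases smul_eq_zero.mp hzero with hc | hpne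
    · linarith [sub_eq_zero.mp hc]
    · exfalso
      have : p (Fin.last m) = p j.castSucc := sub_eq_zero.mp hpne
      have := hpinj this
      exact (Fin.castSucc_lt_last j).ne' this
  -- The family q = (p 0, …, p (m-1), v) is linearly independent.
  set q : Fin (m + 1) → (Fin (n + 1) → ℝ) :=
    Fin.snoc (fun j : Fin m => p j.castSucc) v with hq_def
  have hq : LinearIndependent ℝ q := by
    rw [Fintype.linearIndependent_iff]
    intro g hg
    rw [Fin.sum_univ_castSucc] at hg
    simp only [hq_def, Fin.snoc_castSucc, Fin.snoc_last] at hg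
    set c : Fin (m + 1) → ℝ := Fin.snoc (fun j : Fin m => g j.castSucc) 0 with hc_def
    have hsum : (∑ i, c i • p i) + g (Fin.last m) • v = 0 := by
      rw [Fin.sum_univ_castSucc]
      simp only [hc_def, Fin.snoc_castSucc, Fin.snoc_last, zero_smul, add_zero]
      exact hg
    have hall := key c (g (Fin.last m)) hsum
    have hcs : ∀ j : Fin m, g j.castSucc = 0 := by
      intro j
      have := hall j
      simpa [hc_def] using this
    have hlast : g (Fin.last m) = 0 := by
      have : g (Fin.last m) • v = 0 := by
        rw [Finset.sum_congr rfl (fun i _ => by rw [hcs i, zero_smul])] at hg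
        simpa using hg
      rcases smul_eq_zero.mp this with h | h
      · exact h
      · exact absurd h hv
    intro i
    exact Fin.lastCases hlast hcs i
  have hrange : Set.range q ⊆ insert v (Set.range p) := by
    rintro x ⟨i, rfl⟩
    refine Fin.lastCases ?_ ?_ i
    · simp [hq_def]
    · intro j
      simp only [hq_def, Fin.snoc_castSucc]
      exact Set.mem_insert_iff.mpr (Or.inr ⟨j.castSucc, rfl⟩)
  have hle : Submodule.span ℝ (Set.range q) ≤ Submodule.span ℝ (insert v (Set.range p)) :=
    Submodule.span_mono hrange
  have hcard : Module.finrank ℝ (Submodule.span ℝ (Set.range q)) = m + 1 := by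
    rw [finrank_span_eq_card hq]
    simp
  calc m + 1 = Module.finrank ℝ (Submodule.span ℝ (Set.range q)) := hcard.symm
    _ ≤ Module.finrank ℝ (Submodule.span ℝ (insert v (Set.range p))) :=
        Submodule.finrank_mono hle
end

section
/- For g ≥ 2, if the full symmetry group Sym(B_g) ≅ (Z/2Z)^g ⋊ S_g acts by orthogonal maps on R^{n+1} preserving an embedded copy of the bouquet B_g of g circles in S^n and inducing the standard action on B_g (where (Z/2Z)^g reverses individual circles and S_g permutes them), then n ≥ 2g − 1. -/
/-!
For `x ∈ C i` moved by `ρ i`, the vector `x - ρ i x` is nonzero, orthogonal to every vector fixed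
by the isometry `ρ i`, and fixed by every other `ρ j`. This gives `g` pairwise orthogonal vectors,
all orthogonal to the common fixed space of the `ρ i`. That space contains the vertex `v` and the
points `p i ∈ C i \ {v}` fixed by `ρ i`. The symmetric group fixes `v` and permutes the `p i`
two-transitively, so the `p i` are equiangular unit vectors with equal inner products against
`v`. Hence the `g` vectors `p i - p i₀ + v` of the fixed space are linearly independent, and
with the previous `g` vectors they give `2g ≤ n + 1`.
-/

open RealInnerProductSpace Equiv

theorem ne_of_mem_of_ne_vertex {α ι : Type*} {C : ι → Set α} {v : α}
    (hinter : ∀ i j, i ≠ j → C i ∩ C j = {v}) {i j : ι} (hij : i ≠ j) {x y : α} (hx : x ∈ C i)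
    (hy : y ∈ C j) (hxv : x ≠ v) : x ≠ y := by
  rintro rfl
  have hmem : x ∈ C i ∩ C j := ⟨hx, hy⟩
  rw [hinter i j hij] at hmem
  exact hxv hmem

theorem map_vertex_eq {α ι : Type*} {C : ι → Set α} {v : α} (hv : ∀ i, v ∈ C i)
    (hinter : ∀ i j, i ≠ j → C i ∩ C j = {v}) {T : α → α} {σ : Perm ι}
    (hTC : ∀ i, T '' C i = C (σ i)) {i j : ι} (hij : i ≠ j) : T v = v := by
  have hmem : T v ∈ C (σ i) ∩ C (σ j) :=
    ⟨hTC i ▸ Set.mem_image_of_mem T (hv i), hTC j ▸ Set.mem_image_of_mem T (hv j)⟩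
  rwa [hinter _ _ (σ.injective.ne hij)] at hmem

section InnerProductSpace

variable {E : Type*} [NormedAddCommGroup E] [InnerProductSpace ℝ E]

theorem inner_sub_map_eq_zero_of_map_eq (T : E ≃ₗᵢ[ℝ] E) (x : E) {u : E} (hu : T u = u) :
    ⟪x - T x, u⟫ = 0 := by
  have : ⟪T x, u⟫ = ⟪x, u⟫ := by rw [← T.inner_map_map x u, hu]
  rw [inner_sub_left, this, sub_self]

theorem linearIndependent_sum_elim_sub_map {ι κ : Type*} (ρ : ι → E ≃ₗᵢ[ℝ] E) {x : ι → E}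
    (hx : ∀ k, ρ k (x k) ≠ x k)
    (hρx : ∀ j k, j ≠ k → ρ j (x k - ρ k (x k)) = x k - ρ k (x k))
    {q : κ → E} (hq : LinearIndependent ℝ q) (hρq : ∀ k i, ρ k (q i) = q i) :
    LinearIndependent ℝ (Sum.elim (fun k => x k - ρ k (x k)) q) := by
  have hw : LinearIndependent ℝ fun k => x k - ρ k (x k) :=
    linearIndependent_of_ne_zero_of_inner_eq_zero (fun k => sub_ne_zero.2 (hx k).symm)
      fun j k hjk => inner_sub_map_eq_zero_of_map_eq (ρ j) (x j) (hρx j k hjk)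
  refine hw.sum_type hq (Submodule.isOrtho_span.2 ?_).disjoint
  rintro _ ⟨k, rfl⟩ _ ⟨i, rfl⟩
  exact inner_sub_map_eq_zero_of_map_eq (ρ k) (x k) (hρq k i)

theorem inner_sum_smul_of_equiangular {ι : Type*} [Fintype ι] {p : ι → E} {b c : ℝ}
    (hdiag : ∀ i, ⟪p i, p i⟫ = b) (hoff : ∀ i j, i ≠ j → ⟪p i, p j⟫ = c) (a : ι → ℝ) (k : ι) :
    ⟪∑ i, a i • p i, p k⟫ = c * ∑ i, a i + (b - c) * a k := by
  classical
  have hp : ∀ i, ⟪p i, p k⟫ = c + if i = k then b - c else 0 := by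
    intro i
    split_ifs with h
    · rw [h, hdiag]; ring
    · rw [hoff i k h, add_zero]
  simp only [sum_inner, real_inner_smul_left, hp, mul_add, Finset.sum_add_distrib,
    ← Finset.sum_mul, mul_ite, mul_zero, Finset.sum_ite_eq', Finset.mem_univ, if_true]
  ring

theorem linearIndependent_sub_add_of_equiangular {ι : Type*} [Fintype ι] {p : ι → E}
    {b c d : ℝ} (hdiag : ∀ i, ⟪p i, p i⟫ = b) (hoff : ∀ i j, i ≠ j → ⟪p i, p j⟫ = c)
    (hcb : c ≠ b) {u : E} (hu : u ≠ 0) (hup : ∀ i, ⟪u, p i⟫ = d) (i₀ : ι) :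
    LinearIndependent ℝ fun i => p i - p i₀ + u := by
  rw [Fintype.linearIndependent_iff]
  intro a ha
  have hs : ∑ i, a i = 0 := by
    have := congrArg (fun y => ⟪u, y⟫) ha
    simp only [inner_sum, real_inner_smul_right, inner_add_right, inner_sub_right, hup,
      sub_self, zero_add, ← Finset.sum_mul, inner_zero_right] at this
    exact (mul_eq_zero.1 this).resolve_right (inner_self_ne_zero.2 hu)
  have hap : ∑ i, a i • p i = 0 := by
    rw [← ha]
    simp only [smul_add, smul_sub, Finset.sum_add_distrib, Finset.sum_sub_distrib,
      ← Finset.sum_smul, hs, zero_smul, sub_zero, add_zero]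
  intro k
  have := inner_sum_smul_of_equiangular hdiag hoff a k
  rw [hap, inner_zero_left, hs, mul_zero, zero_add] at this
  exact (mul_eq_zero.1 this.symm).resolve_left (sub_ne_zero.2 hcb.symm)

theorem inner_eq_inner_of_perm_equivariant {ι : Type*} {τ : Perm ι → E ≃ₗᵢ[ℝ] E} {p : ι → E}
    (hτp : ∀ σ i, τ σ (p i) = p (σ i)) {i j k l : ι} (hij : i ≠ j) (hkl : k ≠ l) :
    ⟪p k, p l⟫ = ⟪p i, p j⟫ := by
  obtain ⟨σ, rfl, rfl⟩ :=
    MulAction.is_two_pretransitive_iff.1 (Perm.isMultiplyPretransitive ι 2) hij hkl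
  simp only [Perm.smul_def, ← hτp, LinearIsometryEquiv.inner_map_map]

theorem inner_eq_inner_of_perm_equivariant_of_fixed {ι : Type*} [DecidableEq ι]
    {τ : Perm ι → E ≃ₗᵢ[ℝ] E} {p : ι → E} (hτp : ∀ σ i, τ σ (p i) = p (σ i)) {v : E}
    (hτv : ∀ σ, τ σ v = v) (i j : ι) : ⟪v, p j⟫ = ⟪v, p i⟫ := by
  simpa [hτv, hτp] using ((τ (swap i j)).inner_map_map v (p i))

theorem map_fixedPoint_eq {ι : Type*} {C : ι → Set E} {v : E} {ρ : ι → E ≃ₗᵢ[ℝ] E} {p : ι → E}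
    (hp : ∀ i, p i ∈ C i ∧ p i ≠ v ∧ ρ i (p i) = p i)
    (hup : ∀ i q, q ∈ C i ∧ q ≠ v ∧ ρ i q = q → q = p i)
    {T : E ≃ₗᵢ[ℝ] E} {σ : Perm ι} (hTC : ∀ i, T '' C i = C (σ i)) (hTv : T v = v)
    (hconj : ∀ i, T * ρ i * T⁻¹ = ρ (σ i)) (i : ι) : T (p i) = p (σ i) := by
  obtain ⟨hpC, hpv, hρp⟩ := hp i
  refine hup (σ i) _ ⟨hTC i ▸ Set.mem_image_of_mem T hpC, hTv ▸ T.injective.ne hpv, ?_⟩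
  rw [← hconj i]
  show T (ρ i (T.symm (T (p i)))) = T (p i)
  rw [T.symm_apply_apply, hρp]

end InnerProductSpace

theorem bouquet_equivariant_embedding_dim_bound_general
    (n g : ℕ) (hg : 2 ≤ g)
    (C : Fin g → Set (EuclideanSpace ℝ (Fin (n + 1))))
    (v : EuclideanSpace ℝ (Fin (n + 1)))
    (hsphere : ∀ i, C i ⊆ Metric.sphere (0 : EuclideanSpace ℝ (Fin (n + 1))) 1)
    (hv : ∀ i, v ∈ C i)
    (hinter : ∀ i j, i ≠ j → C i ∩ C j = {v})
    (ρ : Fin g → (EuclideanSpace ℝ (Fin (n + 1)) ≃ₗᵢ[ℝ] EuclideanSpace ℝ (Fin (n + 1))))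
    (τ : Equiv.Perm (Fin g) →
      (EuclideanSpace ℝ (Fin (n + 1)) ≃ₗᵢ[ℝ] EuclideanSpace ℝ (Fin (n + 1))))
    (hconj : ∀ (σ : Equiv.Perm (Fin g)) (i : Fin g), τ σ * ρ i * (τ σ)⁻¹ = ρ (σ i))
    (hρC : ∀ i, (ρ i) '' C i = C i)
    (hρfix : ∀ i j, j ≠ i → ∀ x ∈ C j, ρ i x = x)
    (hρnontriv : ∀ i, ∃ x ∈ C i, ρ i x ≠ x)
    (hρfixpt : ∀ i, ∃! p, p ∈ C i ∧ p ≠ v ∧ ρ i p = p)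
    (hτC : ∀ (σ : Equiv.Perm (Fin g)) (i : Fin g), (τ σ) '' C i = C (σ i)) :
    2 * g - 1 ≤ n := by
  have : Nontrivial (Fin g) := Fin.nontrivial_iff_two_le.2 hg
  obtain ⟨i₀, i₁, hi⟩ := exists_pair_ne (Fin g)
  choose p hp hup using hρfixpt
  choose x hx hxρ using hρnontriv
  have hnorm : ∀ i, ∀ y ∈ C i, ‖y‖ = 1 := fun i y hy => mem_sphere_zero_iff_norm.1 (hsphere i hy)
  have hτv : ∀ σ, τ σ v = v := fun σ => map_vertex_eq hv hinter (hτC σ) hi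
  have hτp : ∀ σ i, τ σ (p i) = p (σ i) := fun σ =>
    map_fixedPoint_eq hp hup (hτC σ) (hτv σ) (hconj σ)
  have hρv : ∀ k, ρ k v = v := fun k => (exists_ne k).elim fun j hj => hρfix k j hj v (hv j)
  have hρp : ∀ k i, ρ k (p i) = p i := fun k i => by
    rcases eq_or_ne i k with rfl | h
    exacts [(hp i).2.2, hρfix k i h _ (hp i).1]
  have hp₀₁ : ⟪p i₀, p i₁⟫ ≠ 1 := fun h => ne_of_mem_of_ne_vertex hinter hi (hp i₀).1 (hp i₁).1
    (hp i₀).2.1 ((inner_eq_one_iff_of_norm_eq_one (hnorm _ _ (hp i₀).1) (hnorm _ _ (hp i₁).1)).1 h)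
  have hq : LinearIndependent ℝ fun i => p i - p i₀ + v :=
    linearIndependent_sub_add_of_equiangular
      (fun i => by rw [real_inner_self_eq_norm_sq, hnorm i _ (hp i).1, one_pow])
      (fun i j hij => inner_eq_inner_of_perm_equivariant hτp hi hij) hp₀₁
      (ne_zero_of_mem_unit_sphere ⟨v, hsphere i₀ (hv i₀)⟩)
      (fun i => inner_eq_inner_of_perm_equivariant_of_fixed hτp hτv i₀ i) i₀
  have hli := linearIndependent_sum_elim_sub_map ρ hxρ
    (fun j k hjk => by rw [map_sub, hρfix j k hjk.symm _ (hx k),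
      hρfix j k hjk.symm _ (hρC k ▸ Set.mem_image_of_mem _ (hx k))])
    hq (fun k i => by simp only [map_add, map_sub, hρp, hρv])
  have := hli.fintype_card_le_finrank
  simp only [Fintype.card_sum, Fintype.card_fin, finrank_euclideanSpace_fin] at this
  omega

/-- **Main lower bound.** Let `g ≥ 2` and suppose the symmetry group
`Sym(B_g) = (ℤ/2ℤ)^g ⋊ S_g` of the bouquet of `g` circles acts by orthogonal maps on
`ℝ^{n+1}` preserving an embedded copy `B_g = ⋃ᵢ C i ⊂ S^n` (circles `C i` pairwise meeting
exactly at the vertex `v`) and inducing the standard action: `ρ i` reverses the circle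
`C i` (it preserves `C i`, is not the identity on `C i`, and has exactly one fixed point
on `C i \ {v}`), is the identity on each `C j` for `j ≠ i`, and `τ σ` permutes the
circles, with `τ` a homomorphism, the `ρ i` commuting involutions, and
`τ σ (ρ i) (τ σ)⁻¹ = ρ (σ i)`.  Then `n ≥ 2g - 1`. -/
theorem bouquet_equivariant_embedding_dim_bound
    (n g : ℕ) (hg : 2 ≤ g)
    (C : Fin g → Set (EuclideanSpace ℝ (Fin (n + 1))))
    (v : EuclideanSpace ℝ (Fin (n + 1)))
    (hsphere : ∀ i, C i ⊆ Metric.sphere (0 : EuclideanSpace ℝ (Fin (n + 1))) 1)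
    (hcircle : ∀ i, Nonempty (C i ≃ₜ Circle))
    (hv : ∀ i, v ∈ C i)
    (hinter : ∀ i j, i ≠ j → C i ∩ C j = {v})
    (ρ : Fin g → (EuclideanSpace ℝ (Fin (n + 1)) ≃ₗᵢ[ℝ] EuclideanSpace ℝ (Fin (n + 1))))
    (τ : Equiv.Perm (Fin g) →
      (EuclideanSpace ℝ (Fin (n + 1)) ≃ₗᵢ[ℝ] EuclideanSpace ℝ (Fin (n + 1))))
    (hτmul : ∀ σ₁ σ₂, τ (σ₁ * σ₂) = τ σ₁ * τ σ₂)
    (hρ2 : ∀ i, ρ i * ρ i = 1)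
    (hρcomm : ∀ i j, ρ i * ρ j = ρ j * ρ i)
    (hconj : ∀ (σ : Equiv.Perm (Fin g)) (i : Fin g), τ σ * ρ i * (τ σ)⁻¹ = ρ (σ i))
    (hρC : ∀ i, (ρ i) '' C i = C i)
    (hρfix : ∀ i j, j ≠ i → ∀ x ∈ C j, ρ i x = x)
    (hρnontriv : ∀ i, ∃ x ∈ C i, ρ i x ≠ x)
    (hρfixpt : ∀ i, ∃! p, p ∈ C i ∧ p ≠ v ∧ ρ i p = p)
    (hτC : ∀ (σ : Equiv.Perm (Fin g)) (i : Fin g), (τ σ) '' C i = C (σ i)) :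
    2 * g - 1 ≤ n :=
  bouquet_equivariant_embedding_dim_bound_general n g hg C v hsphere hv hinter ρ τ hconj hρC hρfix
    hρnontriv hρfixpt hτC
end
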